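/- Let x, y, z ∈ C and set A̲ = C(x,x). If x is maximal rigid and y, z are rigid, then the canonical map C(y,z) → Hom_{A̲}(C(x,y), C(x,z)) given by C(x,−) is surjective. -/

import Mathlib

/-!
Shared framework: a `k`-linear Frobenius category `E` with projective objects `add r`,
its stable category `C = E̲` (realized as the category `SC` below), triangulated-structure
data on `C` (`TriData`), 2-Calabi–Yau via a Serre-duality pairing, rigid/maximal rigid
objects, and module structures over (stable) endomorphism rings.
-/

namespace Paper

open CategoryTheory Limits

universe v u

variable (E : Type u) [Category.{v} E] [Preadditive E] [HasFiniteBiproducts E] [HasBinaryBiproducts E]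

/-- An exact structure (in the sense of Quillen) on an additive category:
a distinguished class of kernel–cokernel pairs (`conflations`) satisfying the usual axioms. -/
structure ExactStr where
  /-- `conf i p` says that `x ⟶ᵢ y ⟶ₚ z` is a conflation. -/
  conf : ∀ ⦃x y z : E⦄, (x ⟶ y) → (y ⟶ z) → Prop
  conf_comp : ∀ ⦃x y z : E⦄ {i : x ⟶ y} {p : y ⟶ z}, conf i p → i ≫ p = 0
  conf_isKernel : ∀ ⦃x y z : E⦄ {i : x ⟶ y} {p : y ⟶ z} (h : conf i p),
    Nonempty (IsLimit (KernelFork.ofι i (conf_comp h)))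
  conf_isCokernel : ∀ ⦃x y z : E⦄ {i : x ⟶ y} {p : y ⟶ z} (h : conf i p),
    Nonempty (IsColimit (CokernelCofork.ofπ p (conf_comp h)))
  conf_split : ∀ x y : E, conf (biprod.inl : x ⟶ x ⊞ y) (biprod.snd : x ⊞ y ⟶ y)
  conf_iso : ∀ ⦃x y z x' y' z' : E⦄ {i : x ⟶ y} {p : y ⟶ z}
    (e₁ : x ≅ x') (e₂ : y ≅ y') (e₃ : z ≅ z'), conf i p →
    conf (e₁.inv ≫ i ≫ e₂.hom) (e₂.inv ≫ p ≫ e₃.hom)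
  defl_comp : ∀ ⦃x y z w v : E⦄ {i : x ⟶ y} {p : y ⟶ z} {j : v ⟶ z} {p' : z ⟶ w},
    conf i p → conf j p' → ∃ (u : E) (i'' : u ⟶ y), conf i'' (p ≫ p')
  infl_comp : ∀ ⦃x y z w v : E⦄ {i : x ⟶ y} {p : y ⟶ v} {i' : y ⟶ z} {p' : z ⟶ w},
    conf i p → conf i' p' → ∃ (u : E) (q : z ⟶ u), conf (i ≫ i') q
  conf_pullback : ∀ ⦃x y z : E⦄ {i : x ⟶ y} {p : y ⟶ z}, conf i p →
    ∀ ⦃z' : E⦄ (f : z' ⟶ z), ∃ (y' : E) (f' : y' ⟶ y) (p' : y' ⟶ z') (i' : x ⟶ y'),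
      conf i' p' ∧ IsPullback f' p' p f
  conf_pushout : ∀ ⦃x y z : E⦄ {i : x ⟶ y} {p : y ⟶ z}, conf i p →
    ∀ ⦃x' : E⦄ (f : x ⟶ x'), ∃ (y' : E) (f' : y ⟶ y') (i' : x' ⟶ y') (p' : y' ⟶ z),
      conf i' p' ∧ IsPushout f i i' f'

variable {E}

namespace ExactStr

variable (S : ExactStr E)

/-- `p` is a deflation (admissible epimorphism). -/
def IsDeflation {y z : E} (p : y ⟶ z) : Prop := ∃ (x : E) (i : x ⟶ y), S.conf i p

/-- `i` is an inflation (admissible monomorphism). -/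
def IsInflation {x y : E} (i : x ⟶ y) : Prop := ∃ (z : E) (p : y ⟶ z), S.conf i p

/-- Projective object relative to the exact structure. -/
def IsProj (P : E) : Prop :=
  ∀ ⦃y z : E⦄ (p : y ⟶ z), S.IsDeflation p → ∀ f : P ⟶ z, ∃ g : P ⟶ y, g ≫ p = f

/-- Injective object relative to the exact structure. -/
def IsInj (I : E) : Prop :=
  ∀ ⦃x y : E⦄ (i : x ⟶ y), S.IsInflation i → ∀ f : x ⟶ I, ∃ g : y ⟶ I, i ≫ g = f

end ExactStr

/-- `y ∈ add x`: `y` is a direct summand of a finite direct sum of copies of `x`. -/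
def InAdd (x y : E) : Prop :=
  ∃ (n : ℕ) (s : y ⟶ ⨁ (fun _ : Fin n => x)) (t : (⨁ fun _ : Fin n => x) ⟶ y), s ≫ t = 𝟙 y

variable (E) in
/-- A Frobenius exact category with projectives `= add r`:
enough projectives and injectives, projectives and injectives coincide,
and the projective objects are exactly the objects of `add r`. -/
structure Frobenius extends ExactStr E where
  enough_proj : ∀ x : E, ∃ (P : E) (p : P ⟶ x), toExactStr.IsProj P ∧ toExactStr.IsDeflation p
  enough_inj : ∀ x : E, ∃ (I : E) (i : x ⟶ I), toExactStr.IsInj I ∧ toExactStr.IsInflation i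
  proj_iff_inj : ∀ P : E, toExactStr.IsProj P ↔ toExactStr.IsInj P
  /-- the projective generator -/
  r : E
  proj_iff_add : ∀ P : E, toExactStr.IsProj P ↔ InAdd r P

namespace Frobenius

variable (k : Type) [Field k] [CategoryTheory.Linear k E]

variable (S : Frobenius E)

/-- An object of `E` is *good* if it is isomorphic in `E` to `x' ⊕ r` for some `x'`. -/
def Good (x : E) : Prop := ∃ x' : E, Nonempty (x ≅ x' ⊞ S.r)

/-- The `k`-submodule of `x ⟶ y` of morphisms factoring through a projective object. -/
def projIdeal (x y : E) : Submodule k (x ⟶ y) :=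
  Submodule.span k {f | ∃ (P : E) (g : x ⟶ P) (h : P ⟶ y), S.IsProj P ∧ f = g ≫ h}

lemma leftComp_projIdeal {x y z : E} (f : x ⟶ y) {g : y ⟶ z}
    (hg : g ∈ S.projIdeal k y z) : f ≫ g ∈ S.projIdeal k x z := by
  have : S.projIdeal k y z ≤ (S.projIdeal k x z).comap (Linear.leftComp k z f) := by
    rw [projIdeal, Submodule.span_le]
    rintro u ⟨P, a, b, hP, rfl⟩
    exact Submodule.subset_span ⟨P, f ≫ a, b, hP, by simp [Linear.leftComp]⟩
  exact this hg

lemma rightComp_projIdeal {x y z : E} {f : x ⟶ y} (hf : f ∈ S.projIdeal k x y)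
    (g : y ⟶ z) : f ≫ g ∈ S.projIdeal k x z := by
  have : S.projIdeal k x y ≤ (S.projIdeal k x z).comap (Linear.rightComp k x g) := by
    rw [projIdeal, Submodule.span_le]
    rintro u ⟨P, a, b, hP, rfl⟩
    exact Submodule.subset_span ⟨P, a, b ≫ g, hP, by simp [Linear.rightComp]⟩
  exact this hf

/-- Hom-spaces of the stable category `C = E̲`. -/
def SHom (x y : E) : Type _ := (x ⟶ y) ⧸ S.projIdeal k x y

instance (x y : E) : AddCommGroup (S.SHom k x y) :=
  inferInstanceAs (AddCommGroup ((x ⟶ y) ⧸ S.projIdeal k x y))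

instance (x y : E) : Module k (S.SHom k x y) :=
  inferInstanceAs (Module k ((x ⟶ y) ⧸ S.projIdeal k x y))

/-- Class of a morphism of `E` in the stable category. -/
def toS {x y : E} (f : x ⟶ y) : S.SHom k x y := Submodule.Quotient.mk f

lemma toS_surjective (x y : E) : Function.Surjective (S.toS k (x := x) (y := y)) :=
  Submodule.Quotient.mk_surjective _

end Frobenius

/-- The stable category `C = E̲` of the Frobenius category `E`:
same objects, morphisms modulo those factoring through a projective object. -/
def SC (_S : Frobenius E) (k : Type) [Field k] [CategoryTheory.Linear k E] : Type u := E

namespace SC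

variable {S : Frobenius E} {k : Type} [Field k] [CategoryTheory.Linear k E]

/-- The canonical identification of objects of `E` with objects of the stable category. -/
abbrev of (S : Frobenius E) (k : Type) [Field k] [CategoryTheory.Linear k E] (x : E) :
    SC S k := x

/-- The object of `E` underlying an object of the stable category. -/
abbrev un (x : SC S k) : E := x

instance : Category (SC S k) where
  Hom x y := S.SHom k x.un y.un
  id x := S.toS k (𝟙 x.un)
  comp {x y z} f g := by
    refine Quotient.liftOn₂ f g (fun f g => S.toS k (f ≫ g)) ?_
    intro a₁ b₁ a₂ b₂ h₁ h₂
    have h₁' : a₁ - a₂ ∈ S.projIdeal k x.un y.un :=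
      (Submodule.Quotient.eq _).mp (Quotient.sound h₁)
    have h₂' : b₁ - b₂ ∈ S.projIdeal k y.un z.un :=
      (Submodule.Quotient.eq _).mp (Quotient.sound h₂)
    show S.toS k (a₁ ≫ b₁) = S.toS k (a₂ ≫ b₂)
    unfold Frobenius.toS
    apply (Submodule.Quotient.eq _).mpr
    have h : a₁ ≫ b₁ - a₂ ≫ b₂ = a₁ ≫ (b₁ - b₂) + (a₁ - a₂) ≫ b₂ := by
      simp only [Preadditive.comp_sub, Preadditive.sub_comp]; abel
    rw [h]
    exact add_mem (S.leftComp_projIdeal k _ h₂') (S.rightComp_projIdeal k h₁' _)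
  id_comp {x y} f := by
    obtain ⟨f, rfl⟩ := S.toS_surjective k _ _ f
    show S.toS k (𝟙 _ ≫ f) = S.toS k f
    rw [Category.id_comp]
  comp_id {x y} f := by
    obtain ⟨f, rfl⟩ := S.toS_surjective k _ _ f
    show S.toS k (f ≫ 𝟙 _) = S.toS k f
    rw [Category.comp_id]
  assoc {w x y z} f g h := by
    obtain ⟨f, rfl⟩ := S.toS_surjective k _ _ f
    obtain ⟨g, rfl⟩ := S.toS_surjective k _ _ g
    obtain ⟨h, rfl⟩ := S.toS_surjective k _ _ h
    show S.toS k ((f ≫ g) ≫ h) = S.toS k (f ≫ (g ≫ h))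
    rw [Category.assoc]

/-- The canonical functor map on morphisms: the class in the stable category of a
morphism of `E`, seen as a morphism of `SC S k`. -/
def toSC (S : Frobenius E) (k : Type) [Field k] [CategoryTheory.Linear k E]
    {x y : E} (f : x ⟶ y) : SC.of S k x ⟶ SC.of S k y := S.toS k f

lemma toSC_comp {x y z : E} (f : x ⟶ y) (g : y ⟶ z) :
    toSC S k f ≫ toSC S k g = toSC S k (f ≫ g) := rfl

lemma toSC_surjective (x y : E) :
    Function.Surjective (toSC S k (x := x) (y := y)) :=
  Submodule.Quotient.mk_surjective _

instance : Preadditive (SC S k) where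
  homGroup x y := inferInstanceAs (AddCommGroup (S.SHom k x.un y.un))
  add_comp x y z f f' g := by
    obtain ⟨f, rfl⟩ := S.toS_surjective k _ _ f
    obtain ⟨f', rfl⟩ := S.toS_surjective k _ _ f'
    obtain ⟨g, rfl⟩ := S.toS_surjective k _ _ g
    show S.toS k ((f + f') ≫ g) = S.toS k (f ≫ g) + S.toS k (f' ≫ g)
    rw [Preadditive.add_comp]; rfl
  comp_add x y z f g g' := by
    obtain ⟨f, rfl⟩ := S.toS_surjective k _ _ f
    obtain ⟨g, rfl⟩ := S.toS_surjective k _ _ g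
    obtain ⟨g', rfl⟩ := S.toS_surjective k _ _ g'
    show S.toS k (f ≫ (g + g')) = S.toS k (f ≫ g) + S.toS k (f ≫ g')
    rw [Preadditive.comp_add]; rfl

instance : CategoryTheory.Linear k (SC S k) where
  homModule x y := inferInstanceAs (Module k (S.SHom k x.un y.un))
  smul_comp x y z r f g := by
    obtain ⟨f, rfl⟩ := S.toS_surjective k _ _ f
    obtain ⟨g, rfl⟩ := S.toS_surjective k _ _ g
    show S.toS k ((r • f) ≫ g) = r • S.toS k (f ≫ g)
    rw [Linear.smul_comp]; rfl
  comp_smul x y z f r g := by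
    obtain ⟨f, rfl⟩ := S.toS_surjective k _ _ f
    obtain ⟨g, rfl⟩ := S.toS_surjective k _ _ g
    show S.toS k (f ≫ (r • g)) = r • S.toS k (f ≫ g)
    rw [Linear.comp_smul]; rfl

end SC

end Paper

section EndModules

namespace Paper

open CategoryTheory

/-- In any preadditive category, `x ⟶ y` is a right module over `End x`
(i.e. a left module over `(End x)ᵐᵒᵖ`), acting by precomposition. -/
instance moduleEndLeftOp {C : Type*} [Category C] [Preadditive C] {x y : C} :
    Module (End x)ᵐᵒᵖ (x ⟶ y) where
  smul a f := a.unop ≫ f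
  one_smul f := Category.id_comp f
  mul_smul a b f := by
    show (MulOpposite.unop a ≫ MulOpposite.unop b) ≫ f =
      MulOpposite.unop a ≫ MulOpposite.unop b ≫ f
    rw [Category.assoc]
  smul_zero a := Limits.comp_zero
  smul_add a f g := Preadditive.comp_add _ _ _ _ _ _
  add_smul a b f := Preadditive.add_comp _ _ _ _ _ _
  zero_smul f := Limits.zero_comp

lemma op_smul_def {C : Type*} [Category C] [Preadditive C] {x y : C}
    (a : (End x)ᵐᵒᵖ) (f : x ⟶ y) : a • f = a.unop ≫ f := rfl

lemma end_smul_def {C : Type*} [Category C] [Preadditive C] {x y : C}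
    (a : End y) (f : x ⟶ y) : a • f = f ≫ a := rfl

/-- Postcomposition as a map of right `End x`-modules. -/
def postcompL {C : Type*} [Category C] [Preadditive C] {x y z : C} (f : y ⟶ z) :
    (x ⟶ y) →ₗ[(End x)ᵐᵒᵖ] (x ⟶ z) where
  toFun g := g ≫ f
  map_add' g g' := Preadditive.add_comp _ _ _ _ _ _
  map_smul' a g := by
    show (a.unop ≫ g) ≫ f = a.unop ≫ g ≫ f
    rw [Category.assoc]

/-- Precomposition as a map of left `End z`-modules. -/
def precompL {C : Type*} [Category C] [Preadditive C] {x y z : C} (f : x ⟶ y) :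
    (y ⟶ z) →ₗ[End z] (x ⟶ z) where
  toFun g := f ≫ g
  map_add' g g' := Preadditive.comp_add _ _ _ _ _ _
  map_smul' a g := by
    show f ≫ g ≫ a = (f ≫ g) ≫ a
    rw [Category.assoc]

end Paper

end EndModules

namespace Paper

open CategoryTheory Limits

section Tri

variable {E : Type u} [Category.{v} E] [Preadditive E] [HasFiniteBiproducts E]
  [HasBinaryBiproducts E]

/-- The data and axioms of the triangulated structure on the stable category `C = SC S k`
of the Frobenius category `E` (suspension `Σ`, distinguished triangles), together with the
assumptions that `C` is 2-Calabi–Yau (formulated via a nondegenerate associative Serre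
pairing `C(x,y) × C(y,Σ²x) → k`, functorial in both variables), Hom-finite over `k`, and
has split idempotents. -/
structure TriData (S : Frobenius E) (k : Type) [Field k] [CategoryTheory.Linear k E] where
  /-- the suspension functor -/
  susp : SC S k ⥤ SC S k
  equiv : susp.IsEquivalence
  additive : susp.Additive
  linear : Functor.Linear k susp
  /-- distinguished triangles `x ⟶ y ⟶ z ⟶ Σ x` -/
  dtri : ∀ ⦃x y z : SC S k⦄, (x ⟶ y) → (y ⟶ z) → (z ⟶ susp.obj x) → Prop
  dtri_comp_zero : ∀ ⦃x y z : SC S k⦄ {f : x ⟶ y} {g : y ⟶ z} {h : z ⟶ susp.obj x},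
    dtri f g h → f ≫ g = 0
  dtri_rot : ∀ ⦃x y z : SC S k⦄ {f : x ⟶ y} {g : y ⟶ z} {h : z ⟶ susp.obj x},
    dtri f g h → dtri g h (-(susp.map f))
  dtri_complete : ∀ ⦃x y : SC S k⦄ (f : x ⟶ y),
    ∃ (z : SC S k) (g : y ⟶ z) (h : z ⟶ susp.obj x), dtri f g h
  dtri_ext : ∀ ⦃x y z x' y' z' : SC S k⦄
    {f : x ⟶ y} {g : y ⟶ z} {h : z ⟶ susp.obj x}
    {f' : x' ⟶ y'} {g' : y' ⟶ z'} {h' : z' ⟶ susp.obj x'},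
    dtri f g h → dtri f' g' h' → ∀ (a : x ⟶ x') (b : y ⟶ y'), f ≫ b = a ≫ f' →
      ∃ c : z ⟶ z', g ≫ c = b ≫ g' ∧ h ≫ susp.map a = c ≫ h'
  /-- conflations of `E` induce distinguished triangles in the stable category -/
  conf_dtri : ∀ ⦃x y z : E⦄ {i : x ⟶ y} {p : y ⟶ z}, S.conf i p →
    ∃ h : SC.of S k z ⟶ susp.obj (SC.of S k x), dtri (SC.toSC S k i) (SC.toSC S k p) h
  /-- the 2-Calabi–Yau (Serre duality) pairing `C(x,y) ⊗ C(y,Σ²x) → k` -/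
  pair : ∀ (x y : SC S k), (x ⟶ y) →ₗ[k] (y ⟶ susp.obj (susp.obj x)) →ₗ[k] k
  pair_assoc : ∀ ⦃x y z : SC S k⦄ (f : x ⟶ y) (g : y ⟶ z)
    (h : z ⟶ susp.obj (susp.obj x)), pair x z (f ≫ g) h = pair x y f (g ≫ h)
  pair_nondeg_left : ∀ ⦃x y : SC S k⦄ (f : x ⟶ y), (∀ g, pair x y f g = 0) → f = 0
  pair_nondeg_right : ∀ ⦃x y : SC S k⦄ (g : y ⟶ susp.obj (susp.obj x)),
    (∀ f, pair x y f g = 0) → g = 0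
  /-- `C` is Hom-finite -/
  homFinite : ∀ x y : SC S k, FiniteDimensional k (x ⟶ y)
  /-- `C` has split idempotents -/
  idem : IsIdempotentComplete (SC S k)

namespace TriData

variable {k : Type} [Field k] [CategoryTheory.Linear k E] {S : Frobenius E}
variable (T : TriData S k)

/-- `x` is rigid: `C(x, Σx) = 0`. -/
def Rigid (x : SC S k) : Prop := ∀ f : x ⟶ T.susp.obj x, f = 0

/-- `y ∈ add x` in the stable category. -/
def AddSummand (_T : TriData S k) (x y : SC S k) : Prop :=
  ∃ (n : ℕ) (s : y ⟶ SC.of S k (⨁ fun _ : Fin n => x.un))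
    (t : SC.of S k (⨁ fun _ : Fin n => x.un) ⟶ y), s ≫ t = 𝟙 y

/-- `x` is maximal rigid: it is rigid and `C(x ⊕ y, Σ(x ⊕ y)) = 0` implies `y ∈ add x`
(formulated componentwise). -/
def MaxRigid (x : SC S k) : Prop :=
  T.Rigid x ∧ ∀ y : SC S k, T.Rigid y → (∀ f : x ⟶ T.susp.obj y, f = 0) →
    (∀ f : y ⟶ T.susp.obj x, f = 0) → T.AddSummand x y

/-- `Σ² x ≅ x` in the stable category. -/
def SuspSqFix (x : SC S k) : Prop := Nonempty (T.susp.obj (T.susp.obj x) ≅ x)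

end TriData

end Tri

/-- A ring is self-injective if it is injective as a (left) module over itself. -/
def IsSelfInjectiveRing (A : Type*) [Ring A] : Prop := Module.Injective A A

end Paper

namespace Paper

open CategoryTheory Limits

noncomputable section ATensor

set_option linter.unusedSectionVars false

variable (k : Type*) [CommRing k]
variable (A : Type*) [Ring A] [Algebra k A]
variable (M : Type*) [AddCommGroup M] [Module k M] [Module Aᵐᵒᵖ M]
variable (N : Type*) [AddCommGroup N] [Module k N] [Module A N]

/-- The relations defining the tensor product `M ⊗_A N` of a right `A`-module and a
left `A`-module over the (possibly noncommutative) `k`-algebra `A`, as a quotient of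
`M ⊗_k N`. -/
def atensorRel : Submodule k (TensorProduct k M N) :=
  Submodule.span k {t | ∃ (m : M) (a : A) (n : N),
    t = (MulOpposite.op a • m) ⊗ₜ[k] n - m ⊗ₜ[k] (a • n)}

/-- The tensor product `M ⊗_A N` of a right `A`-module and a left `A`-module over the
(possibly noncommutative) `k`-algebra `A`. -/
def ATensor : Type _ := TensorProduct k M N ⧸ atensorRel k A M N

instance : AddCommGroup (ATensor k A M N) :=
  inferInstanceAs (AddCommGroup (TensorProduct k M N ⧸ atensorRel k A M N))

instance : Module k (ATensor k A M N) :=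
  inferInstanceAs (Module k (TensorProduct k M N ⧸ atensorRel k A M N))

namespace ATensor

/-- The canonical balanced bilinear map `M × N → M ⊗_A N`. -/
def mkBilin : M →ₗ[k] N →ₗ[k] ATensor k A M N :=
  (TensorProduct.mk k M N).compr₂ (atensorRel k A M N).mkQ

/-- `m ⊗ n` in `M ⊗_A N`. -/
def mk (m : M) (n : N) : ATensor k A M N := mkBilin k A M N m n

variable {k A M N}

lemma mk_smul (m : M) (a : A) (n : N) :
    mk k A M N (MulOpposite.op a • m) n = mk k A M N m (a • n) := by
  unfold mk mkBilin
  show Submodule.Quotient.mk _ = Submodule.Quotient.mk _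
  rw [Submodule.Quotient.eq]
  exact Submodule.subset_span ⟨m, a, n, rfl⟩

lemma mk_surjective_span (t : ATensor k A M N) :
    ∃ s : TensorProduct k M N, Submodule.Quotient.mk s = t :=
  Submodule.Quotient.mk_surjective _ t

variable {P : Type*} [AddCommGroup P] [Module k P]

/-- Lift a balanced `k`-bilinear map to the tensor product `M ⊗_A N`. -/
def lift (φ : M →ₗ[k] N →ₗ[k] P)
    (bal : ∀ (m : M) (a : A) (n : N), φ (MulOpposite.op a • m) n = φ m (a • n)) :
    ATensor k A M N →ₗ[k] P := by
  refine Submodule.liftQ _ (TensorProduct.lift φ) ?_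
  rw [atensorRel, Submodule.span_le]
  rintro t ⟨m, a, n, rfl⟩
  simp only [SetLike.mem_coe, LinearMap.mem_ker, map_sub, TensorProduct.lift.tmul]
  rw [bal m a n, sub_self]

@[simp] lemma lift_mk (φ : M →ₗ[k] N →ₗ[k] P) (bal) (m : M) (n : N) :
    lift φ bal (mk k A M N m n) = φ m n := rfl

lemma hom_ext {f g : ATensor k A M N →ₗ[k] P}
    (h : ∀ m n, f (mk k A M N m n) = g (mk k A M N m n)) : f = g := by
  apply Submodule.linearMap_qext
  apply TensorProduct.ext'
  intro m n
  exact h m n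

variable {M' : Type*} [AddCommGroup M'] [Module k M'] [Module Aᵐᵒᵖ M']
variable {N' : Type*} [AddCommGroup N'] [Module k N'] [Module A N']

/-- Functoriality of `M ⊗_A N` in the right `A`-module variable. -/
def mapLeft (f : M →ₗ[k] M') (hf : ∀ (a : A) (m : M),
    f (MulOpposite.op a • m) = MulOpposite.op a • f m) :
    ATensor k A M N →ₗ[k] ATensor k A M' N :=
  lift ((mkBilin k A M' N).comp f) (by
    intro m a n
    simp only [LinearMap.comp_apply, hf]
    exact mk_smul _ _ _)

/-- Functoriality of `M ⊗_A N` in the left `A`-module variable. -/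
def mapRight (g : N →ₗ[k] N') (hg : ∀ (a : A) (n : N), g (a • n) = a • g n) :
    ATensor k A M N →ₗ[k] ATensor k A M N' :=
  lift ((mkBilin k A M N').compl₂ g) (by
    intro m a n
    simp only [LinearMap.compl₂_apply, hg]
    exact mk_smul _ _ _)

@[simp] lemma mapLeft_mk (f : M →ₗ[k] M') (hf) (m : M) (n : N) :
    mapLeft (N := N) f hf (mk k A M N m n) = mk k A M' N (f m) n := rfl

@[simp] lemma mapRight_mk (g : N →ₗ[k] N') (hg) (m : M) (n : N) :
    mapRight (M := M) g hg (mk k A M N m n) = mk k A M N' m (g n) := rfl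

end ATensor

end ATensor

end Paper

namespace Paper

open CategoryTheory Limits

section StableModules

variable {E : Type u} [Category.{v} E] [Preadditive E] [HasFiniteBiproducts E]
  [HasBinaryBiproducts E]
variable (k : Type) [Field k] [CategoryTheory.Linear k E]
variable (S : Frobenius E)

namespace Frobenius

/-- Precomposition on stable Hom spaces. -/
def preS {x' x y : E} (a : x' ⟶ x) : S.SHom k x y →ₗ[k] S.SHom k x' y :=
  Submodule.mapQ _ _ (Linear.leftComp k y a)
    (fun f hf => S.leftComp_projIdeal k a hf)

/-- Postcomposition on stable Hom spaces. -/
def postS {x y y' : E} (b : y ⟶ y') : S.SHom k x y →ₗ[k] S.SHom k x y' :=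
  Submodule.mapQ _ _ (Linear.rightComp k x b)
    (fun f hf => S.rightComp_projIdeal k hf b)

@[simp] lemma preS_toS {x' x y : E} (a : x' ⟶ x) (f : x ⟶ y) :
    S.preS k a (S.toS k f) = S.toS k (a ≫ f) := rfl

@[simp] lemma postS_toS {x y y' : E} (b : y ⟶ y') (f : x ⟶ y) :
    S.postS k b (S.toS k f) = S.toS k (f ≫ b) := rfl

/-- `C(x,y)` is a right `E(x,x)`-module. -/
instance shomModuleOp (x y : E) : Module (End x)ᵐᵒᵖ (S.SHom k x y) where
  smul a u := S.preS k a.unop u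
  one_smul u := by
    obtain ⟨f, rfl⟩ := S.toS_surjective k _ _ u
    show S.toS k ((𝟙 x : End x) ≫ f) = S.toS k f
    rw [Category.id_comp]
  mul_smul a b u := by
    obtain ⟨f, rfl⟩ := S.toS_surjective k _ _ u
    show S.toS k ((MulOpposite.unop a ≫ MulOpposite.unop b) ≫ f)
      = S.toS k (MulOpposite.unop a ≫ MulOpposite.unop b ≫ f)
    rw [Category.assoc]
  smul_zero a := map_zero _
  smul_add a u v := map_add _ _ _
  add_smul a b u := by
    obtain ⟨f, rfl⟩ := S.toS_surjective k _ _ u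
    show S.toS k ((MulOpposite.unop a + MulOpposite.unop b) ≫ f)
      = S.toS k (MulOpposite.unop a ≫ f) + S.toS k (MulOpposite.unop b ≫ f)
    rw [Preadditive.add_comp]
    rfl
  zero_smul u := by
    obtain ⟨f, rfl⟩ := S.toS_surjective k _ _ u
    show S.toS k ((0 : x ⟶ x) ≫ f) = 0
    rw [Limits.zero_comp]
    rfl

lemma shom_op_smul_def {x y : E} (a : (End x)ᵐᵒᵖ) (u : S.SHom k x y) :
    a • u = S.preS k a.unop u := rfl

/-- `C(x,y)` is a left `E(y,y)`-module (with the `End`-multiplication convention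
`a * b = b ≫ a`, so the action is by postcomposition). -/
instance shomModuleEnd (x y : E) : Module (End y) (S.SHom k x y) where
  smul b u := S.postS k b u
  one_smul u := by
    obtain ⟨f, rfl⟩ := S.toS_surjective k _ _ u
    show S.toS k (f ≫ (𝟙 y : End y)) = S.toS k f
    rw [Category.comp_id]
  mul_smul a b u := by
    obtain ⟨f, rfl⟩ := S.toS_surjective k _ _ u
    show S.toS k (f ≫ (b ≫ a)) = S.toS k ((f ≫ b) ≫ a)
    rw [Category.assoc]
  smul_zero a := map_zero _
  smul_add a u v := map_add _ _ _
  add_smul a b u := by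
    obtain ⟨f, rfl⟩ := S.toS_surjective k _ _ u
    show S.toS k (f ≫ (a + b)) = S.toS k (f ≫ a) + S.toS k (f ≫ b)
    rw [Preadditive.comp_add]
    rfl
  zero_smul u := by
    obtain ⟨f, rfl⟩ := S.toS_surjective k _ _ u
    show S.toS k (f ≫ (0 : y ⟶ y)) = 0
    rw [Limits.comp_zero]
    rfl

lemma shom_end_smul_def {x y : E} (b : End y) (u : S.SHom k x y) :
    b • u = S.postS k b u := rfl

end Frobenius

end StableModules

section TensorFunctor

variable (A : Type v) [Ring A]
variable (M : Type v) [AddCommGroup M] [Module Aᵐᵒᵖ M]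

/-- The functor `M ⊗_A — : A-Mod ⥤ Ab` (realized with `ℤ`-coefficients),
for a right `A`-module `M`. -/
noncomputable def atensorFunctor : ModuleCat.{v} A ⥤ ModuleCat.{v} ℤ where
  obj N := ModuleCat.of ℤ (ATensor ℤ A M N)
  map {N N'} g := ModuleCat.ofHom (ATensor.mapRight (M := M) (g.hom.toAddMonoidHom.toIntLinearMap)
    (fun a n => map_smul g.hom a n))
  map_id N := by
    apply ModuleCat.hom_ext
    apply ATensor.hom_ext
    intro m n
    rfl
  map_comp {N N' N''} g h := by
    apply ModuleCat.hom_ext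
    apply ATensor.hom_ext
    intro m n
    rfl

noncomputable instance : (atensorFunctor.{v} A M).Additive where
  map_add := by
    intros N N' g h
    apply ModuleCat.hom_ext
    apply ATensor.hom_ext
    intro m n
    show ATensor.mk ℤ A M _ m (g.hom n + h.hom n) =
      ATensor.mk ℤ A M _ m (g.hom n) + ATensor.mk ℤ A M _ m (h.hom n)
    exact map_add (ATensor.mkBilin ℤ A M _ m) _ _

end TensorFunctor

end Paper

/-!
Take a right `add x`-approximation `β : x₀ ⟶ y` (possible since `C(x, y)` is finite-dimensional)
and complete it to a triangle `x₀ ⟶ y ⟶ c ⟶ Σx₀`. Rigidity of `x` makes every map `x ⟶ c`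
vanish; 2-Calabi–Yau duality and rigidity of `y` then make `c = Σx₁` with `x₁` rigid and
`C(x, Σx₁) = C(x₁, Σx) = 0`, so `x₁ ∈ add x` by maximality (the Zhou–Zhu triangle
`x₁ ⟶ x₀ ⟶ y ⟶ Σx₁`). An `A̲`-linear `φ : C(x, y) ⟶ C(x, z)` induces `b : x₀ ⟶ z` with
`w ≫ b = φ (w ≫ β)`; since `x₁ ∈ add x`, `b` vanishes on `x₁ ⟶ x₀`, hence factors through `β`.
-/

namespace Paper

open CategoryTheory Limits Preadditive

section Preadditive

variable {C : Type*} [Category C] [Preadditive C]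

lemma forall_eq_zero_of_iso {a b a' b' : C} (h : ∀ f : a ⟶ b, f = 0) (e : a ≅ a') (e' : b ≅ b')
    (f : a' ⟶ b') : f = 0 := by
  simpa using e.inv ≫= h (e.hom ≫ f ≫ e'.inv) =≫ e'.hom

lemma _root_.CategoryTheory.Functor.forall_eq_zero_iff {D : Type*} [Category D] [Preadditive D]
    (F : C ⥤ D) [F.Full] [F.Faithful] [F.PreservesZeroMorphisms] {a b : C} :
    (∀ g : F.obj a ⟶ F.obj b, g = 0) ↔ ∀ f : a ⟶ b, f = 0 :=
  ⟨fun h f => F.map_injective (by rw [h (F.map f), F.map_zero]),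
    fun h g => by rw [← F.map_preimage g, h (F.preimage g), F.map_zero]⟩

variable {J : Type*}

lemma forall_eq_zero_of_isBilimit {f : J → C} {b : Bicone f} (hb : b.IsBilimit) {w : C}
    (h : ∀ j (u : w ⟶ f j), u = 0) (u : w ⟶ b.pt) : u = 0 :=
  hb.isLimit.hom_ext fun ⟨j⟩ => by simpa using h j (u ≫ b.π j)

variable [Fintype J]

lemma eq_zero_of_retract_of_isBilimit {x x₁ w : C} {b : Bicone fun _ : J => x}
    (hb : b.IsBilimit) {s : x₁ ⟶ b.pt} {t : b.pt ⟶ x₁} (hst : s ≫ t = 𝟙 x₁) (g : x₁ ⟶ w)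
    (hg : ∀ u : x ⟶ x₁, u ≫ g = 0) : g = 0 := by
  have hg' : ∀ j, b.ι j ≫ t ≫ g = 0 := fun j => by rw [← Category.assoc, hg]
  calc g = s ≫ (∑ j, b.π j ≫ b.ι j) ≫ t ≫ g := by
        rw [IsBilimit.total hb, Category.id_comp, reassoc_of% hst]
    _ = 0 := by simp [sum_comp, hg']

lemma exists_forall_exists_comp_eq {k : Type*} [Semiring k] [Linear k C] {x y : C}
    (b : Bicone fun _ : J => x) {f : J → (x ⟶ y)} (hf : Submodule.span k (Set.range f) = ⊤) :
    ∃ β : b.pt ⟶ y, ∀ u : x ⟶ y, ∃ w, w ≫ β = u := by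
  classical
  refine ⟨∑ j, b.π j ≫ f j, fun u => ?_⟩
  have hι : ∀ i, b.ι i ≫ ∑ j, b.π j ≫ f j = f i := fun i => by
    simp [comp_sum, ← Category.assoc, b.ι_π, ite_comp]
  obtain ⟨c, hc⟩ := (Submodule.mem_span_range_iff_exists_fun k).mp (hf ▸ Submodule.mem_top : u ∈ _)
  exact ⟨∑ i, c i • b.ι i, by simp [sum_comp, hι, hc]⟩

lemma exists_forall_comp_eq_apply {x y z : C} {b : Bicone fun _ : J => x} (hb : b.IsBilimit)
    (β : b.pt ⟶ y) (φ : (x ⟶ y) →ₗ[(End x)ᵐᵒᵖ] (x ⟶ z)) :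
    ∃ b' : b.pt ⟶ z, ∀ w : x ⟶ b.pt, w ≫ b' = φ (w ≫ β) := by
  refine ⟨∑ j, b.π j ≫ φ (b.ι j ≫ β), fun w => ?_⟩
  have hφ : ∀ j, (w ≫ b.π j) ≫ φ (b.ι j ≫ β) = φ ((w ≫ b.π j) ≫ b.ι j ≫ β) := fun j =>
    (φ.map_smul (MulOpposite.op (w ≫ b.π j)) _).symm
  calc w ≫ ∑ j, b.π j ≫ φ (b.ι j ≫ β) = φ (w ≫ (∑ j, b.π j ≫ b.ι j) ≫ β) := by
        simp only [comp_sum, sum_comp, map_sum, ← Category.assoc, hφ]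
    _ = φ (w ≫ β) := by rw [IsBilimit.total hb, Category.id_comp]

end Preadditive

namespace SC

variable {E : Type u} [Category.{v} E] [Preadditive E] [HasFiniteBiproducts E]
  [HasBinaryBiproducts E] (S : Frobenius E) (k : Type) [Field k] [Linear k E]

def quotientFunctor : E ⥤ SC S k where
  obj := SC.of S k
  map := SC.toSC S k
  map_id _ := rfl
  map_comp _ _ := rfl

instance : (quotientFunctor S k).Additive where
  map_add := rfl

variable {S k}

noncomputable def powBicone (x : SC S k) (n : ℕ) : Bicone fun _ : Fin n => x :=
  (quotientFunctor S k).mapBicone (biproduct.bicone fun _ => x.un)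

noncomputable def isBilimitPowBicone (x : SC S k) (n : ℕ) : (powBicone x n).IsBilimit :=
  isBilimitOfPreserves (f := fun _ => x.un) (quotientFunctor S k) (biproduct.isBilimit _)

end SC

namespace TriData

variable {E : Type u} [Category.{v} E] [Preadditive E] [HasFiniteBiproducts E]
  [HasBinaryBiproducts E] {k : Type} [Field k] [Linear k E] {S : Frobenius E} (T : TriData S k)

instance : T.susp.IsEquivalence := T.equiv

instance : T.susp.Additive := T.additive

section Exact

variable {a b c : SC S k} {f : a ⟶ b} {g : b ⟶ c} {h : c ⟶ T.susp.obj a}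

/- Both exactness statements come from comparing with the split triangle `w → w ⊞ w → w → Σw`
given by a split conflation of `E`. -/
lemma yoneda_exact₂ (hT : T.dtri f g h) {w : SC S k} (u : b ⟶ w) (hu : f ≫ u = 0) :
    ∃ v : c ⟶ w, g ≫ v = u := by
  obtain ⟨_, hsplit⟩ := T.conf_dtri (S.conf_split w.un w.un)
  obtain ⟨v, hv, -⟩ := T.dtri_ext hT hsplit 0
    (u ≫ SC.toSC S k (biprod.inr : w.un ⟶ w.un ⊞ w.un))
    (by rw [reassoc_of% hu, zero_comp, zero_comp])
  refine ⟨v, ?_⟩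
  have hid : SC.toSC S k (biprod.inr : w.un ⟶ w.un ⊞ w.un) ≫ SC.toSC S k biprod.snd = 𝟙 w := by
    rw [SC.toSC_comp, biprod.inr_snd]
    rfl
  rwa [Category.assoc, hid, Category.comp_id] at hv

lemma coyoneda_exact₂ (hT : T.dtri f g h) {w : SC S k} (u : w ⟶ b) (hu : u ≫ g = 0) :
    ∃ v : w ⟶ a, v ≫ f = u := by
  obtain ⟨_, hsplit⟩ := T.conf_dtri (S.conf_split w.un w.un)
  obtain ⟨v, -, hv⟩ := T.dtri_ext (T.dtri_rot hsplit) (T.dtri_rot hT)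
    (SC.toSC S k (biprod.fst : w.un ⊞ w.un ⟶ w.un) ≫ u) 0
    (by rw [comp_zero, Category.assoc, hu, comp_zero])
  obtain ⟨v, rfl⟩ := T.susp.map_surjective v
  refine ⟨v, T.susp.map_injective ?_⟩
  rw [neg_comp, comp_neg, neg_inj, ← Functor.map_comp, ← Functor.map_comp, ← Category.assoc,
    SC.toSC_comp, biprod.inl_fst] at hv
  rw [← hv]
  exact congrArg T.susp.map (Category.id_comp u)

lemma coyoneda_exact₃ (hT : T.dtri f g h) {w : SC S k} (u : w ⟶ c) (hu : u ≫ h = 0) :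
    ∃ v : w ⟶ b, v ≫ g = u :=
  T.coyoneda_exact₂ (T.dtri_rot hT) u hu

end Exact

lemma forall_eq_zero_hom_susp_susp {a b : SC S k} (h : ∀ f : a ⟶ b, f = 0)
    (g : b ⟶ T.susp.obj (T.susp.obj a)) : g = 0 :=
  T.pair_nondeg_right g fun f => by rw [h f, map_zero, LinearMap.zero_apply]

lemma forall_eq_zero_hom_susp_comm {a b : SC S k} (h : ∀ f : a ⟶ T.susp.obj b, f = 0)
    (g : b ⟶ T.susp.obj a) : g = 0 :=
  T.pair_nondeg_left g fun f => by rw [T.susp.forall_eq_zero_iff.mpr h f, map_zero]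

section Cone

variable {x₀ y c : SC S k} {β : x₀ ⟶ y} {γ : y ⟶ c} {δ : c ⟶ T.susp.obj x₀}

lemma forall_hom_cone_eq_zero (hT : T.dtri β γ δ) {x : SC S k}
    (hβ : ∀ u : x ⟶ y, ∃ w, w ≫ β = u) (hx₀ : ∀ u : x ⟶ T.susp.obj x₀, u = 0) (u : x ⟶ c) :
    u = 0 := by
  obtain ⟨v, rfl⟩ := T.coyoneda_exact₃ hT u (hx₀ _)
  obtain ⟨w, rfl⟩ := hβ v
  rw [Category.assoc, T.dtri_comp_zero hT, comp_zero]

lemma rigid_cone (hT : T.dtri β γ δ) (hy : T.Rigid y)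
    (hc : ∀ u : c ⟶ T.susp.obj (T.susp.obj x₀), u = 0) : T.Rigid c := by
  have hfac : ∀ h : c ⟶ T.susp.obj c, ∃ v : c ⟶ T.susp.obj y, v ≫ T.susp.map γ = h := by
    intro h
    obtain ⟨v, hv⟩ := T.coyoneda_exact₃ (T.dtri_rot (T.dtri_rot (T.dtri_rot hT))) h
      (by rw [comp_neg, hc (h ≫ T.susp.map δ), neg_zero])
    exact ⟨-v, by rwa [neg_comp, ← comp_neg]⟩
  intro h
  refine T.pair_nondeg_left h fun g => ?_
  obtain ⟨g, rfl⟩ := T.susp.map_surjective g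
  obtain ⟨v, rfl⟩ := hfac h
  obtain ⟨v₀, rfl⟩ := hfac g
  rw [T.pair_assoc, ← Functor.map_comp, ← Category.assoc, hy (γ ≫ v₀), zero_comp,
    Functor.map_zero, map_zero]

/- `α` is the desuspension of the connecting morphism, so that `x₁ → x₀ → y → Σx₁` is the
triangle rotated backwards. -/
lemma exists_yoneda_exact_of_susp_iso_cone (hT : T.dtri β γ δ) {x₁ : SC S k}
    (e : T.susp.obj x₁ ≅ c) :
    ∃ α : x₁ ⟶ x₀, α ≫ β = 0 ∧ ∀ {z : SC S k} (b : x₀ ⟶ z), α ≫ b = 0 → ∃ g, β ≫ g = b := by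
  obtain ⟨α, hα⟩ := T.susp.map_surjective (e.hom ≫ δ)
  have hδ : δ = e.inv ≫ T.susp.map α := by rw [hα, e.inv_hom_id_assoc]
  have hT₂ := T.dtri_rot (T.dtri_rot hT)
  refine ⟨α, T.susp.map_injective ?_, fun b hb => ?_⟩
  · have hδβ := T.dtri_comp_zero hT₂
    rw [comp_neg, neg_eq_zero, hδ, Category.assoc, ← Functor.map_comp] at hδβ
    rw [Functor.map_zero, ← cancel_epi e.inv, hδβ, comp_zero]
  · obtain ⟨v, hv⟩ := T.yoneda_exact₂ hT₂ (T.susp.map b)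
      (by rw [hδ, Category.assoc, ← Functor.map_comp, hb, Functor.map_zero, comp_zero])
    obtain ⟨g, rfl⟩ := T.susp.map_surjective v
    exact ⟨-g, T.susp.map_injective (by rwa [Functor.map_comp, Functor.map_neg, comp_neg,
      ← neg_comp])⟩

end Cone

lemma exists_addSummand_susp_iso_cone {x y c : SC S k} {n : ℕ} {β : (SC.powBicone x n).pt ⟶ y}
    {γ : y ⟶ c} {δ : c ⟶ T.susp.obj (SC.powBicone x n).pt} (hx : T.MaxRigid x) (hy : T.Rigid y)
    (hT : T.dtri β γ δ) (hβ : ∀ u : x ⟶ y, ∃ w, w ≫ β = u) :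
    ∃ x₁, T.AddSummand x x₁ ∧ Nonempty (T.susp.obj x₁ ≅ c) := by
  have hb := isBilimitOfPreserves T.susp (SC.isBilimitPowBicone x n)
  have hxc : ∀ u : x ⟶ c, u = 0 :=
    T.forall_hom_cone_eq_zero hT hβ (forall_eq_zero_of_isBilimit hb fun _ => hx.1)
  have hc : T.Rigid c := T.rigid_cone hT hy (forall_eq_zero_of_isBilimit
    (isBilimitOfPreserves T.susp hb) fun _ => T.forall_eq_zero_hom_susp_susp hxc)
  let e := T.susp.objObjPreimageIso c
  have hxx₁ := forall_eq_zero_of_iso hxc (Iso.refl x) e.symm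
  refine ⟨_, hx.2 _ ?_ hxx₁ (T.forall_eq_zero_hom_susp_comm hxx₁), ⟨e⟩⟩
  exact T.susp.forall_eq_zero_iff.mp (forall_eq_zero_of_iso hc e.symm (T.susp.mapIso e).symm)

lemma eq_zero_of_addSummand {x x₁ w : SC S k} (hx₁ : T.AddSummand x x₁) (g : x₁ ⟶ w)
    (hg : ∀ u : x ⟶ x₁, u ≫ g = 0) : g = 0 := by
  obtain ⟨n, s, t, hst⟩ := hx₁
  exact eq_zero_of_retract_of_isBilimit (SC.isBilimitPowBicone x n) hst g hg

end TriData

end Paper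

set_option linter.unusedSectionVars false

open CategoryTheory Limits Paper in
theorem statement_5_general
    (k : Type) [Field k]
    (E : Type u) [Category.{v} E] [Preadditive E] [HasFiniteBiproducts E]
    [HasBinaryBiproducts E] [CategoryTheory.Linear k E]
    (S : Frobenius E) (T : TriData S k)
    (x y z : SC S k)
    (hx : T.MaxRigid x) (hy : T.Rigid y) :
    Function.Surjective
      (fun g : y ⟶ z => (postcompL g : (x ⟶ y) →ₗ[(End x)ᵐᵒᵖ] (x ⟶ z))) := by
  intro φ
  have := T.homFinite x y
  obtain ⟨n, f, hf⟩ := Module.Finite.exists_fin (R := k) (M := x ⟶ y)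
  obtain ⟨β, hβ⟩ := exists_forall_exists_comp_eq (SC.powBicone x n) hf
  obtain ⟨c, γ, δ, hT⟩ := T.dtri_complete β
  obtain ⟨x₁, hx₁, ⟨e⟩⟩ := T.exists_addSummand_susp_iso_cone hx hy hT hβ
  obtain ⟨α, hαβ, hα⟩ := T.exists_yoneda_exact_of_susp_iso_cone hT e
  obtain ⟨b, hb⟩ := exists_forall_comp_eq_apply (SC.isBilimitPowBicone x n) β φ
  obtain ⟨g, hg⟩ := hα b <| T.eq_zero_of_addSummand hx₁ _ fun u => by
    rw [← Category.assoc, hb, Category.assoc, hαβ, comp_zero, map_zero]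
  refine ⟨g, LinearMap.ext fun u => ?_⟩
  obtain ⟨w, rfl⟩ := hβ u
  show (w ≫ β) ≫ g = φ (w ≫ β)
  rw [Category.assoc, hg, hb]

open CategoryTheory Limits Paper in
/-- **Statement 5** (Lemma 2.2(g)).
Let `C` be the stable category of the `k`-linear Frobenius category `E` (with projectives
`add r`), assumed 2-Calabi–Yau, Hom-finite and with split idempotents (packaged, together
with the triangulated structure, in `T : TriData S k`).  Let `x, y, z ∈ C`, `A̲ = C(x,x)`.
If `x` is maximal rigid and `y, z` are rigid, then the canonical map
`C(x,−) : C(y,z) → Hom_{A̲}(C(x,y), C(x,z))`, `g ↦ (f ↦ f ≫ g)`, is surjective. -/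
theorem statement_5
    (k : Type) [Field k] [IsAlgClosed k]
    (E : Type u) [Category.{v} E] [Preadditive E] [HasFiniteBiproducts E]
    [HasBinaryBiproducts E] [CategoryTheory.Linear k E]
    (S : Frobenius E) (T : TriData S k)
    (x y z : SC S k)
    (hx : T.MaxRigid x) (hy : T.Rigid y) (hz : T.Rigid z) :
    Function.Surjective
      (fun g : y ⟶ z => (postcompL g : (x ⟶ y) →ₗ[(End x)ᵐᵒᵖ] (x ⟶ z))) :=
  statement_5_general k E S T x y z hx hy
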